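/- arXiv:2510.23373 — 3 statements merged into one kernel-verified Lean document; each statement's English description precedes it below -/
import Mathlib

section
/- Let f : \mathbb{N} \to \mathbb{R} be nonnegative and let c \ge 0 be such that f(k)/\sqrt{k} \to c as k \to \infty. Then the Poissonized average satisfies (e^{-\lambda} \sum_{k=0}^{\infty} f(k) \lambda^k / k!) / \sqrt{\lambda} \to c as the real parameter \lambda \to \infty. In particular, a functional of random point sets whose expectation under n i.i.d. uniform points is c\sqrt{n} + o(\sqrt{n}) has expectation c\sqrt{\lambda} + o(\sqrt{\lambda}) under a Poisson number of points with mean \lambda. -/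
/-!
Under the Poisson distribution with mean `λ`, `√k` concentrates at `√λ`: from
`|√k - √λ| ≤ |k - λ| / √λ ≤ 1/2 + (k - λ)² / (2λ)` and the variance identity `E (k - λ)² = λ`
one gets `E |√k - √λ| ≤ 1`. Writing `f k = c √k + o(√k)` as `|f k - c √k| ≤ ε √k + B_ε`, the
Poisson average of `f` differs from `c √λ` by at most `ε √λ + B_ε + ε + |c|`, for every `ε > 0`.
-/

open Filter Topology Asymptotics
open scoped Nat

section Asymptotics

variable {α : Type*} {l : Filter α}

theorem isLittleO_sub_mul_iff_tendsto_div {u v : α → ℝ} {c : ℝ} (hv : ∀ᶠ x in l, v x ≠ 0) :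
    (fun x => u x - c * v x) =o[l] v ↔ Tendsto (fun x => u x / v x) l (𝓝 c) := by
  rw [isLittleO_iff_tendsto' (hv.mono fun x hx h => absurd h hx),
    ← tendsto_sub_nhds_zero_iff (u := fun x => u x / v x)]
  exact tendsto_congr' (hv.mono fun x hx => by
    dsimp only
    rw [sub_div, mul_div_cancel_right₀ _ hx])

theorem Asymptotics.IsLittleO.exists_forall_norm_le_add {E F : Type*}
    [SeminormedAddGroup E] [SeminormedAddGroup F] {u : ℕ → E} {v : ℕ → F} (h : u =o[atTop] v)
    {ε : ℝ} (hε : 0 < ε) :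
    ∃ B, ∀ k, ‖u k‖ ≤ ε * ‖v k‖ + B := by
  obtain ⟨N, hN⟩ := eventually_atTop.1 (h.def hε)
  refine ⟨∑ k ∈ Finset.range N, ‖u k‖, fun k => ?_⟩
  have hB : 0 ≤ ∑ k ∈ Finset.range N, ‖u k‖ := Finset.sum_nonneg fun _ _ => norm_nonneg _
  rcases lt_or_ge k N with hk | hk
  · have := Finset.single_le_sum (fun i _ => norm_nonneg (u i)) (Finset.mem_range.2 hk)
    nlinarith [norm_nonneg (v k)]
  · linarith [hN k hk]

theorem isLittleO_of_forall_exists_eventually_le_add {E : Type*} [Norm E] {u : α → E}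
    {v : α → ℝ} (hv : Tendsto v l atTop) (h : ∀ ε > 0, ∃ C, ∀ᶠ x in l, ‖u x‖ ≤ ε * v x + C) :
    u =o[l] v := by
  refine IsLittleO.of_bound fun ε hε => ?_
  obtain ⟨C, hC⟩ := h (ε / 2) (half_pos hε)
  filter_upwards [hC, hv.eventually_ge_atTop (2 * C / ε), hv.eventually_ge_atTop 0]
    with x hux hvC hv0
  rw [Real.norm_of_nonneg hv0]
  rw [div_le_iff₀ hε] at hvC
  linarith

end Asymptotics

theorem Real.hasSum_pow_div_factorial (x : ℝ) :
    HasSum (fun n : ℕ => x ^ n / n !) (Real.exp x) := by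
  rw [Real.exp_eq_exp_ℝ]
  exact NormedSpace.expSeries_div_hasSum_exp x

theorem hasSum_descFactorial_mul_pow_div_factorial (x : ℝ) (j : ℕ) :
    HasSum (fun n : ℕ => (n.descFactorial j : ℝ) * x ^ n / n !) (x ^ j * Real.exp x) := by
  rw [← hasSum_nat_add_iff' j, Finset.sum_eq_zero fun n hn => by
    simp [Nat.descFactorial_eq_zero_iff_lt.2 (Finset.mem_range.1 hn)], sub_zero]
  refine ((Real.hasSum_pow_div_factorial x).mul_left (x ^ j)).congr_fun fun n => ?_
  have h := Nat.factorial_mul_descFactorial (Nat.le_add_left j n)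
  rw [Nat.add_sub_cancel] at h
  rw [← h]
  push_cast
  field_simp
  ring

theorem hasSum_sq_sub_mul_pow_div_factorial (x : ℝ) :
    HasSum (fun n : ℕ => ((n : ℝ) - x) ^ 2 * x ^ n / n !) (x * Real.exp x) := by
  have h2 := hasSum_descFactorial_mul_pow_div_factorial x 2
  have h1 := (hasSum_descFactorial_mul_pow_div_factorial x 1).mul_left (1 - 2 * x)
  have h0 := (hasSum_descFactorial_mul_pow_div_factorial x 0).mul_left (x ^ 2)
  convert! (h2.add h1).add h0 using 1
  · funext n
    simp only [Nat.cast_descFactorial_two, Nat.descFactorial_one, Nat.descFactorial_zero]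
    push_cast
    ring
  · ring

theorem abs_sqrt_sub_sqrt_le {a x : ℝ} (ha : 0 ≤ a) (hx : 0 < x) :
    |√a - √x| ≤ 1 / 2 + (a - x) ^ 2 / (2 * x) := by
  have hsq : √x ^ 2 = x := Real.sq_sqrt hx.le
  have hfactor : a - x = (√a - √x) * (√a + √x) := by
    ring_nf
    rw [Real.sq_sqrt ha, hsq]
  have hdiff : |√a - √x| * √x ≤ |a - x| := by
    rw [hfactor, abs_mul, abs_of_pos (by positivity : 0 < √a + √x)]
    gcongr
    linarith [Real.sqrt_nonneg a]
  have hmain : 2 * x * |√a - √x| ≤ x + (a - x) ^ 2 := by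
    calc 2 * x * |√a - √x| = 2 * √x * (|√a - √x| * √x) := by
          linear_combination (-2 * |√a - √x|) * hsq
      _ ≤ 2 * √x * |a - x| := by gcongr
      _ ≤ x + (a - x) ^ 2 := by nlinarith [sq_nonneg (|a - x| - √x), sq_abs (a - x)]
  rw [show 1 / 2 + (a - x) ^ 2 / (2 * x) = (x + (a - x) ^ 2) / (2 * x) by field_simp,
    le_div_iff₀ (by positivity)]
  linarith

noncomputable def poissonMean (x : ℝ) (g : ℕ → ℝ) : ℝ :=
  Real.exp (-x) * ∑' k : ℕ, g k * x ^ k / k !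

theorem abs_poissonMean_sub_le {x m α β : ℝ} {g : ℕ → ℝ} (hx : 0 ≤ x)
    (hg : ∀ k : ℕ, |g k - m| ≤ α + β * ((k : ℝ) - x) ^ 2) :
    |poissonMean x g - m| ≤ α + β * x := by
  have hexp := Real.hasSum_pow_div_factorial x
  have hdom : HasSum (fun k : ℕ => (α + β * ((k : ℝ) - x) ^ 2) * x ^ k / k !)
      ((α + β * x) * Real.exp x) := by
    convert! (hexp.mul_left α).add
      ((hasSum_sq_sub_mul_pow_div_factorial x).mul_left β) using 1
    · funext k; ring
    · ring
  have hbound (k : ℕ) :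
      ‖(g k - m) * x ^ k / (k ! : ℝ)‖ ≤ (α + β * ((k : ℝ) - x) ^ 2) * x ^ k / k ! := by
    rw [Real.norm_eq_abs, mul_div_assoc, mul_div_assoc, abs_mul,
      abs_of_nonneg (by positivity : (0 : ℝ) ≤ x ^ k / k !)]
    exact mul_le_mul_of_nonneg_right (hg k) (by positivity)
  have hsum : Summable fun k : ℕ => (g k - m) * x ^ k / k ! :=
    Summable.of_norm_bounded hdom.summable hbound
  have hcenter : poissonMean x g - m = Real.exp (-x) * ∑' k : ℕ, (g k - m) * x ^ k / k ! := by
    have hg_sum : ∑' k : ℕ, g k * x ^ k / k !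
        = ∑' k : ℕ, (g k - m) * x ^ k / k ! + m * Real.exp x := by
      rw [← (hsum.hasSum.add (hexp.mul_left m)).tsum_eq]
      congr 1; funext k; ring
    have hinv : Real.exp (-x) * Real.exp x = 1 := by
      rw [← Real.exp_add, neg_add_cancel, Real.exp_zero]
    rw [poissonMean, hg_sum]
    linear_combination m * hinv
  rw [hcenter, abs_mul, Real.abs_exp, Real.exp_neg, ← le_div_iff₀' (by positivity),
    div_inv_eq_mul]
  exact tsum_of_norm_bounded hdom hbound

theorem abs_poissonMean_sub_mul_sqrt_le {f : ℕ → ℝ} {c ε B x : ℝ} (hε : 0 ≤ ε) (hx : 0 < x)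
    (hf : ∀ k : ℕ, |f k - c * √k| ≤ ε * √k + B) :
    |poissonMean x f - c * √x| ≤ ε * √x + (B + ε + |c|) := by
  have key := abs_poissonMean_sub_le (g := f) (m := c * √x)
    (α := ε * √x + B + (ε + |c|) / 2) (β := (ε + |c|) / (2 * x)) hx.le fun k => by
      have hk := abs_sqrt_sub_sqrt_le (Nat.cast_nonneg k) hx
      have hsplit : f k - c * √x = (f k - c * √k) + c * (√k - √x) := by ring
      have hsqrt : √k ≤ √x + |√k - √x| := by linarith [le_abs_self (√k - √x)]
      calc |f k - c * √x| ≤ |f k - c * √k| + |c| * |√k - √x| := by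
            rw [hsplit, ← abs_mul]; exact abs_add_le _ _
        _ ≤ ε * √x + B + (ε + |c|) * |√k - √x| := by nlinarith [hf k]
        _ ≤ ε * √x + B + (ε + |c|) * (1 / 2 + ((k : ℝ) - x) ^ 2 / (2 * x)) := by gcongr
        _ = _ := by ring
  convert key using 1
  field_simp
  ring

theorem stmt1_general (f : ℕ → ℝ) (c : ℝ)
    (h : Tendsto (fun k : ℕ => f k / Real.sqrt k) atTop (nhds c)) :
    Tendsto (fun lam : ℝ =>
        (Real.exp (-lam) * ∑' k : ℕ, f k * lam ^ k / (Nat.factorial k)) / Real.sqrt lam)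
      atTop (nhds c) := by
  have hf : (fun k : ℕ => f k - c * √k) =o[atTop] fun k : ℕ => √(k : ℝ) :=
    (isLittleO_sub_mul_iff_tendsto_div ((eventually_gt_atTop 0).mono fun k hk =>
      (Real.sqrt_pos.2 (Nat.cast_pos.2 hk)).ne')).2 h
  refine (isLittleO_sub_mul_iff_tendsto_div (u := fun x => poissonMean x f)
    ((eventually_gt_atTop 0).mono fun x hx => (Real.sqrt_pos.2 hx).ne')).1
    (isLittleO_of_forall_exists_eventually_le_add Real.tendsto_sqrt_atTop fun ε hε => ?_)
  obtain ⟨B, hB⟩ := hf.exists_forall_norm_le_add hε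
  refine ⟨B + ε + |c|, (eventually_gt_atTop 0).mono fun x hx => ?_⟩
  refine abs_poissonMean_sub_mul_sqrt_le hε.le hx fun k => ?_
  simpa [Real.norm_eq_abs, abs_of_nonneg (Real.sqrt_nonneg _)] using hB k

/-- Poissonization: if `f k / √k → c` for a nonnegative function `f` and `c ≥ 0`, then the
Poissonized average `e^{-λ} ∑_k f k · λ^k / k!` divided by `√λ` also tends to `c`
as the real parameter `λ → ∞`. -/
theorem stmt1 (f : ℕ → ℝ) (hf : ∀ k, 0 ≤ f k) (c : ℝ) (hc : 0 ≤ c)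
    (h : Tendsto (fun k : ℕ => f k / Real.sqrt k) atTop (nhds c)) :
    Tendsto (fun lam : ℝ =>
        (Real.exp (-lam) * ∑' k : ℕ, f k * lam ^ k / (Nat.factorial k)) / Real.sqrt lam)
      atTop (nhds c) :=
  stmt1_general f c h
end

section
/- Let a and b be points of the unit square [0,1]^2 in the Euclidean plane, and let D be the closed disk with center (a+b)/2 and radius dist(a,b)/2, i.e. the disk having the segment from a to b as a diameter (so a and b are antipodal points on its boundary circle). Then the Lebesgue area of D \cap [0,1]^2 is at least half the area of D; that is, vol(D \cap [0,1]^2) \ge (\pi/2) \cdot (dist(a,b)/2)^2. -/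
/-!
In coordinates, `x` lies in the closed disk with diameter `ab` iff
`(x₁ - a₁)(x₁ - b₁) + (x₂ - a₂)(x₂ - b₂) ≤ 0` (Thales). When `a` and `b` lie in the unit
square, the part of this disk outside the square is the union of four caps, one beyond each side.
Reflecting a cap across its side maps it into the part of the disk inside the square, and the
four reflected caps are pairwise disjoint, so the area outside the square is at most the area
inside it.
-/

open MeasureTheory Set

theorem EuclideanGeometry.mem_closedBall_midpoint_iff {V P : Type*} [NormedAddCommGroup V]
    [InnerProductSpace ℝ V] [MetricSpace P] [NormedAddTorsor V P] (a b x : P) :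
    x ∈ Metric.closedBall (midpoint ℝ a b) (dist a b / 2) ↔
      dist x a ^ 2 + dist x b ^ 2 ≤ dist a b ^ 2 := by
  rw [Metric.mem_closedBall, ← sq_le_sq₀ dist_nonneg (by positivity),
    dist_sq_add_dist_sq_eq_two_mul_dist_midpoint_sq_add_half_dist_sq]
  constructor <;> intro h <;> nlinarith

theorem measure_le_two_mul_of_subset_union_of_preimage_subset {α ι : Type*} [MeasurableSpace α]
    [Countable ι] {μ : Measure α} {D S : Set α} {C : ι → Set α} {φ : ι → α → α}
    (hφ : ∀ i, MeasurePreserving (φ i) μ μ) (hC : ∀ i, MeasurableSet (C i))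
    (hD : D ⊆ S ∪ ⋃ i, C i) (hS : ∀ i, φ i ⁻¹' C i ⊆ S)
    (hdisj : Pairwise fun i j ↦ Disjoint (φ i ⁻¹' C i) (φ j ⁻¹' C j)) : μ D ≤ 2 * μ S :=
  calc μ D ≤ μ S + μ (⋃ i, C i) := (measure_mono hD).trans (measure_union_le _ _)
    _ ≤ μ S + ∑' i, μ (C i) := by gcongr; exact measure_iUnion_le _
    _ = μ S + ∑' i, μ (φ i ⁻¹' C i) := by
      simp only [fun i ↦ (hφ i).measure_preimage (hC i).nullMeasurableSet]
    _ = μ S + μ (⋃ i, φ i ⁻¹' C i) := by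
      rw [measure_iUnion hdisj fun i ↦ (hφ i).measurable (hC i)]
    _ ≤ μ S + μ S := by gcongr; exact iUnion_subset hS
    _ = 2 * μ S := (two_mul _).symm

def diameterDisk (a b : ℝ × ℝ) : Set (ℝ × ℝ) :=
  {p | (p.1 - a.1) * (p.1 - b.1) + (p.2 - a.2) * (p.2 - b.2) ≤ 0}

def outerHalfPlane : Fin 4 → Set (ℝ × ℝ) :=
  ![{p | p.1 < 0}, {p | 1 < p.1}, {p | p.2 < 0}, {p | 1 < p.2}]

def squareReflection : Fin 4 → ℝ × ℝ → ℝ × ℝ :=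
  ![fun p ↦ (-p.1, p.2), fun p ↦ (2 - p.1, p.2), fun p ↦ (p.1, -p.2), fun p ↦ (p.1, 2 - p.2)]

theorem measurableSet_diameterDisk (a b : ℝ × ℝ) : MeasurableSet (diameterDisk a b) :=
  measurableSet_le (by fun_prop) measurable_const

theorem measurableSet_outerHalfPlane (i : Fin 4) : MeasurableSet (outerHalfPlane i) := by
  fin_cases i
  exacts [measurableSet_lt measurable_fst measurable_const,
    measurableSet_lt measurable_const measurable_fst,
    measurableSet_lt measurable_snd measurable_const,
    measurableSet_lt measurable_const measurable_snd]

theorem compl_unitSquare_subset_iUnion_outerHalfPlane :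
    (Icc 0 1 ×ˢ Icc 0 1 : Set (ℝ × ℝ))ᶜ ⊆ ⋃ i, outerHalfPlane i := by
  rintro ⟨x, y⟩ h
  simp only [mem_compl_iff, mem_prod, mem_Icc, not_and_or, not_le] at h
  rw [mem_iUnion]
  rcases h with (hx | hx) | (hy | hy)
  exacts [⟨0, hx⟩, ⟨1, hx⟩, ⟨2, hy⟩, ⟨3, hy⟩]

theorem measurePreserving_squareReflection (i : Fin 4) :
    MeasurePreserving (squareReflection i) volume volume := by
  rw [Measure.volume_eq_prod]
  fin_cases i
  · exact (Measure.measurePreserving_neg _).prod (.id _)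
  · exact (Measure.measurePreserving_sub_left _ 2).prod (.id _)
  · exact (MeasurePreserving.id _).prod (Measure.measurePreserving_neg _)
  · exact (MeasurePreserving.id _).prod (Measure.measurePreserving_sub_left _ 2)

/-- The point `(-s, t)` with `s > 0` lies in the disk with diameter `(α, γ)(β, δ)`: then so does
its mirror image `(s, t)`, which moreover lies in the unit square. -/
theorem reflected_diameter_ineq {α β γ δ s t : ℝ} (hα : α ∈ Icc (0 : ℝ) 1)
    (hβ : β ∈ Icc (0 : ℝ) 1) (hγ : γ ∈ Icc (0 : ℝ) 1) (hδ : δ ∈ Icc (0 : ℝ) 1) (hs : 0 < s)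
    (h : (s + α) * (s + β) + (t - γ) * (t - δ) ≤ 0) :
    (s - α) * (s - β) + (t - γ) * (t - δ) ≤ 0 ∧ s ≤ 1 ∧ t ∈ Icc 0 1 := by
  obtain ⟨hα, hα'⟩ := hα
  obtain ⟨hβ, hβ'⟩ := hβ
  obtain ⟨hγ, hγ'⟩ := hγ
  obtain ⟨hδ, hδ'⟩ := hδ
  have hpos : 0 < (s + α) * (s + β) := by positivity
  refine ⟨by nlinarith [mul_nonneg hs.le (add_nonneg hα hβ)], ?_, ?_, ?_⟩
  · nlinarith [sq_nonneg (2 * t - γ - δ), mul_nonneg hs.le (add_nonneg hα hβ), mul_nonneg hα hβ,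
      mul_nonneg (sub_nonneg.2 hγ') (sub_nonneg.2 hδ'), mul_nonneg hγ hδ]
  · by_contra! ht
    nlinarith [mul_pos (sub_pos.2 (ht.trans_le hγ)) (sub_pos.2 (ht.trans_le hδ))]
  · by_contra! ht
    nlinarith [mul_pos (sub_pos.2 (hγ'.trans_lt ht)) (sub_pos.2 (hδ'.trans_lt ht))]

theorem squareReflection_preimage_subset {a b : ℝ × ℝ} (ha : a ∈ Icc 0 1 ×ˢ Icc 0 1)
    (hb : b ∈ Icc 0 1 ×ˢ Icc 0 1) (i : Fin 4) :
    squareReflection i ⁻¹' (diameterDisk a b ∩ outerHalfPlane i) ⊆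
      diameterDisk a b ∩ Icc 0 1 ×ˢ Icc 0 1 := by
  obtain ⟨ha1, ha2⟩ := ha
  obtain ⟨hb1, hb2⟩ := hb
  rintro ⟨x, y⟩ ⟨hD, hout⟩
  fin_cases i <;>
    simp only [diameterDisk, squareReflection, outerHalfPlane, Fin.reduceFinMk, Fin.isValue,
      Matrix.cons_val, Matrix.cons_val_zero, Matrix.cons_val_one, mem_ofPred_eq,
      Left.neg_neg_iff, mem_inter_iff, mem_prod] at hD hout ⊢
  · obtain ⟨h, hx, hy⟩ := reflected_diameter_ineq (t := y) ha1 hb1 ha2 hb2 hout (by linarith)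
    exact ⟨h, ⟨hout.le, hx⟩, hy⟩
  · obtain ⟨h, hx, hy⟩ := reflected_diameter_ineq (s := 1 - x) (t := y) (Icc.one_sub_mem ha1)
      (Icc.one_sub_mem hb1) ha2 hb2 (by linarith) (by linarith)
    exact ⟨by linarith, ⟨by linarith, by linarith⟩, hy⟩
  · obtain ⟨h, hy, hx⟩ := reflected_diameter_ineq (t := x) ha2 hb2 ha1 hb1 hout (by linarith)
    exact ⟨by linarith, hx, hout.le, hy⟩
  · obtain ⟨h, hy, hx⟩ := reflected_diameter_ineq (s := 1 - y) (t := x) (Icc.one_sub_mem ha2)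
      (Icc.one_sub_mem hb2) ha1 hb1 (by linarith) (by linarith)
    exact ⟨by linarith, hx, by linarith, by linarith⟩

theorem pairwise_disjoint_squareReflection_preimage {a b : ℝ × ℝ} (ha : a ∈ Icc 0 1 ×ˢ Icc 0 1)
    (hb : b ∈ Icc 0 1 ×ˢ Icc 0 1) :
    Pairwise fun i j ↦ Disjoint (squareReflection i ⁻¹' (diameterDisk a b ∩ outerHalfPlane i))
      (squareReflection j ⁻¹' (diameterDisk a b ∩ outerHalfPlane j)) := by
  obtain ⟨⟨ha1, ha1'⟩, ha2, ha2'⟩ := ha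
  obtain ⟨⟨hb1, hb1'⟩, hb2, hb2'⟩ := hb
  have h1 := mul_nonneg ha1 hb1
  have h2 := mul_nonneg ha2 hb2
  have h1' := mul_nonneg (sub_nonneg.2 ha1') (sub_nonneg.2 hb1')
  have h2' := mul_nonneg (sub_nonneg.2 ha2') (sub_nonneg.2 hb2')
  -- In each case the sum of the two disk inequalities is positive.
  refine (pairwise_disjoint_on _).2 fun i j hij ↦ disjoint_left.2 ?_
  rintro ⟨x, y⟩ ⟨hDi, hi⟩ ⟨hDj, hj⟩
  fin_cases i <;> fin_cases j <;>
    simp only [Fin.zero_eta, Fin.isValue, Fin.mk_one, Fin.reduceFinMk, Fin.reduceLT, Fin.lt_one_iff,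
      Nat.reduceAdd, Fin.reduceEq, lt_self_iff_false, not_lt_zero, zero_lt_one, diameterDisk,
      squareReflection, Matrix.cons_val', Matrix.cons_val_fin_one, Matrix.cons_val_zero,
      Matrix.cons_val_one, Matrix.cons_val, mem_ofPred_eq, outerHalfPlane, Left.neg_neg_iff]
      at hij hDi hi hDj hj ⊢
  · nlinarith [sq_nonneg (2 * x + a.1 + b.1 - 2), sq_nonneg (2 * y - a.2 - b.2)]
  · nlinarith [mul_pos hi hi, sq_nonneg y]
  · nlinarith [mul_pos hi hi, sq_nonneg (1 - y)]
  · nlinarith [mul_pos (sub_pos.2 hi) (sub_pos.2 hi), sq_nonneg y]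
  · nlinarith [mul_pos (sub_pos.2 hi) (sub_pos.2 hi), sq_nonneg (1 - y)]
  · nlinarith [sq_nonneg (2 * y + a.2 + b.2 - 2), sq_nonneg (2 * x - a.1 - b.1)]

theorem volume_diameterDisk_le_two_mul_volume_inter_unitSquare {a b : ℝ × ℝ}
    (ha : a ∈ Icc 0 1 ×ˢ Icc 0 1) (hb : b ∈ Icc 0 1 ×ˢ Icc 0 1) :
    volume (diameterDisk a b) ≤ 2 * volume (diameterDisk a b ∩ Icc 0 1 ×ˢ Icc 0 1) := by
  refine measure_le_two_mul_of_subset_union_of_preimage_subset measurePreserving_squareReflection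
    (fun i ↦ (measurableSet_diameterDisk a b).inter (measurableSet_outerHalfPlane i)) ?_
    (squareReflection_preimage_subset ha hb) (pairwise_disjoint_squareReflection_preimage ha hb)
  intro p hp
  by_cases hQ : p ∈ Icc 0 1 ×ˢ Icc 0 1
  · exact Or.inl ⟨hp, hQ⟩
  · obtain ⟨i, hi⟩ := mem_iUnion.1 (compl_unitSquare_subset_iUnion_outerHalfPlane hQ)
    exact Or.inr (mem_iUnion.2 ⟨i, hp, hi⟩)

theorem EuclideanSpace.closedBall_midpoint_eq_preimage_diameterDisk
    (a b : EuclideanSpace ℝ (Fin 2)) :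
    Metric.closedBall (midpoint ℝ a b) (dist a b / 2) =
      (fun x ↦ (x 0, x 1)) ⁻¹' diameterDisk (a 0, a 1) (b 0, b 1) := by
  ext x
  simp only [EuclideanGeometry.mem_closedBall_midpoint_iff, EuclideanSpace.dist_sq_eq,
    Fin.sum_univ_two, Real.dist_eq, sq_abs, mem_preimage, diameterDisk, mem_ofPred_eq]
  constructor <;> intro h <;> linarith

theorem EuclideanSpace.volume_closedBall_midpoint_le_two_mul_volume_inter_unitSquare
    {a b : EuclideanSpace ℝ (Fin 2)} (ha : ∀ i, a i ∈ Icc (0 : ℝ) 1)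
    (hb : ∀ i, b i ∈ Icc (0 : ℝ) 1) :
    volume (Metric.closedBall (midpoint ℝ a b) (dist a b / 2)) ≤
      2 * volume (Metric.closedBall (midpoint ℝ a b) (dist a b / 2) ∩
        {x : EuclideanSpace ℝ (Fin 2) | ∀ i, x i ∈ Icc (0 : ℝ) 1}) := by
  have hf : MeasurePreserving (fun x : EuclideanSpace ℝ (Fin 2) ↦ (x 0, x 1)) :=
    (volume_preserving_finTwoArrow ℝ).comp
      (EuclideanSpace.volume_preserving_symm_measurableEquiv_toLp _)
  have hsquare : {x : EuclideanSpace ℝ (Fin 2) | ∀ i, x i ∈ Icc (0 : ℝ) 1} =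
      (fun x ↦ (x 0, x 1)) ⁻¹' Icc 0 1 ×ˢ Icc 0 1 := by
    ext x
    simp only [mem_ofPred_eq, Fin.forall_fin_two, mem_preimage, mem_prod]
  have hD := measurableSet_diameterDisk (a 0, a 1) (b 0, b 1)
  rw [hsquare, closedBall_midpoint_eq_preimage_diameterDisk, ← preimage_inter,
    hf.measure_preimage hD.nullMeasurableSet,
    hf.measure_preimage (hD.inter (measurableSet_Icc.prod measurableSet_Icc)).nullMeasurableSet]
  exact volume_diameterDisk_le_two_mul_volume_inter_unitSquare ⟨ha 0, ha 1⟩ ⟨hb 0, hb 1⟩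

/-- If `a` and `b` lie in the unit square, then at least half of the closed disk having the
segment from `a` to `b` as a diameter lies inside the unit square:
`vol(D ∩ [0,1]²) ≥ (π/2)·(dist a b / 2)²`. -/
theorem stmt2 (a b : EuclideanSpace ℝ (Fin 2))
    (ha : ∀ i, a i ∈ Set.Icc (0 : ℝ) 1) (hb : ∀ i, b i ∈ Set.Icc (0 : ℝ) 1) :
    ENNReal.ofReal (Real.pi / 2 * (dist a b / 2) ^ 2) ≤
      volume (Metric.closedBall (midpoint ℝ a b) (dist a b / 2) ∩
        {x : EuclideanSpace ℝ (Fin 2) | ∀ i, x i ∈ Set.Icc (0 : ℝ) 1}) := by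
  have key := EuclideanSpace.volume_closedBall_midpoint_le_two_mul_volume_inter_unitSquare ha hb
  rw [EuclideanSpace.volume_closedBall_fin_two] at key
  calc ENNReal.ofReal (Real.pi / 2 * (dist a b / 2) ^ 2)
      = ENNReal.ofReal ((dist a b / 2) ^ 2 * Real.pi / 2) := by ring_nf
    _ = ENNReal.ofReal (dist a b / 2) ^ 2 * ENNReal.ofReal Real.pi / 2 := by
      rw [ENNReal.ofReal_div_of_pos two_pos, ENNReal.ofReal_mul (by positivity),
        ENNReal.ofReal_pow (by positivity), ENNReal.ofReal_ofNat]
    _ ≤ _ := ENNReal.div_le_of_le_mul' key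
end

section
/- The quantity (1/\sqrt{\pi}) \cdot (2 \int_0^1 t^{1/2} e^{-t} dt - \int_0^1 t^{3/2} e^{-t} dt) lies between 0.31445 and 0.31446; in particular it is at least 0.31445, and hence twice this quantity is at least 0.6289. -/
/-!
Expand `e^{-t}` in its Taylor polynomial of degree `n - 1`: on `[0, 1]` the remainder is at most
`(n + 1) / (n! n) · tⁿ`, so `∫₀¹ t^s e^{-t} dt` equals `∑_{i<n} (-1)^i / (i! (s + i + 1))` up to
`(n + 1) / (n! n (s + n + 1))`. With `n = 10` this pins down both integrals to within `10⁻⁷`,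
and together with `3.141592 < π < 3.141593` the quantity is `0.3144520…`.
-/

open intervalIntegral Finset Real
open scoped Nat

lemma integral_rpow_zero_one {r : ℝ} (hr : 0 ≤ r) : ∫ t in (0 : ℝ)..1, t ^ r = 1 / (r + 1) := by
  rw [integral_rpow (Or.inl (by linarith)), one_rpow, zero_rpow (by positivity), sub_zero]

lemma integral_rpow_mul_neg_pow_div_factorial {s : ℝ} (hs : 0 ≤ s) (i : ℕ) :
    ∫ t in (0 : ℝ)..1, t ^ s * ((-t) ^ i / i !) = (-1) ^ i / (i ! * (s + i + 1)) := by
  have hmonomial : Set.EqOn (fun t : ℝ => t ^ s * ((-t) ^ i / i !))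
      (fun t => (-1) ^ i / i ! * t ^ (s + i)) (Set.uIcc 0 1) := by
    intro t ht
    rw [Set.uIcc_of_le zero_le_one] at ht
    simp only [rpow_add_of_nonneg ht.1 hs (Nat.cast_nonneg i), rpow_natCast, neg_pow t]
    ring
  rw [integral_congr hmonomial, integral_const_mul, integral_rpow_zero_one (by positivity)]
  field_simp

lemma abs_rpow_mul_exp_neg_sub_taylor_le {s t : ℝ} (hs : 0 ≤ s) (ht₀ : 0 ≤ t) (ht₁ : t ≤ 1)
    {n : ℕ} (hn : 0 < n) :
    |t ^ s * exp (-t) - t ^ s * ∑ i ∈ range n, (-t) ^ i / i !|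
      ≤ (n + 1) / (n ! * n) * t ^ (s + n) := by
  have htaylor := exp_bound (x := -t) (by rwa [abs_neg, abs_of_nonneg ht₀]) hn
  rw [abs_neg, abs_of_nonneg ht₀, Nat.cast_succ] at htaylor
  rw [← mul_sub, abs_mul, abs_of_nonneg (rpow_nonneg ht₀ s),
    rpow_add_of_nonneg ht₀ hs (Nat.cast_nonneg n), rpow_natCast]
  calc t ^ s * |exp (-t) - ∑ i ∈ range n, (-t) ^ i / i !|
      ≤ t ^ s * (t ^ n * ((n + 1) / (n ! * n))) := by gcongr
    _ = (n + 1) / (n ! * n) * (t ^ s * t ^ n) := by ring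

theorem abs_integral_rpow_mul_exp_neg_sub_sum_le {s : ℝ} (hs : 0 ≤ s) {n : ℕ} (hn : 0 < n) :
    |(∫ t in (0 : ℝ)..1, t ^ s * exp (-t)) - ∑ i ∈ range n, (-1) ^ i / (i ! * (s + i + 1))|
      ≤ (n + 1) / (n ! * n) / (s + n + 1) := by
  have hf : Continuous fun t : ℝ => t ^ s * exp (-t) := by fun_prop
  have hp : Continuous fun t : ℝ => t ^ s * ∑ i ∈ range n, (-t) ^ i / i ! := by fun_prop
  have hsum : ∫ t in (0 : ℝ)..1, t ^ s * ∑ i ∈ range n, (-t) ^ i / i !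
      = ∑ i ∈ range n, (-1) ^ i / (i ! * (s + i + 1)) := by
    simp_rw [mul_sum]
    rw [integral_finsetSum fun i _ => (by fun_prop : Continuous _).intervalIntegrable _ _]
    exact sum_congr rfl fun i _ => integral_rpow_mul_neg_pow_div_factorial hs i
  rw [← hsum, ← integral_sub (hf.intervalIntegrable _ _) (hp.intervalIntegrable _ _)]
  calc |∫ t in (0 : ℝ)..1, t ^ s * exp (-t) - t ^ s * ∑ i ∈ range n, (-t) ^ i / i !|
      ≤ ∫ t in (0 : ℝ)..1, |t ^ s * exp (-t) - t ^ s * ∑ i ∈ range n, (-t) ^ i / i !| :=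
        abs_integral_le_integral_abs zero_le_one
    _ ≤ ∫ t in (0 : ℝ)..1, (n + 1) / (n ! * n) * t ^ (s + n) := by
        refine integral_mono_on zero_le_one ((hf.sub hp).abs.intervalIntegrable _ _)
          (Continuous.intervalIntegrable
            (continuous_const.mul (continuous_rpow_const (by positivity))) _ _) fun t ht => ?_
        exact abs_rpow_mul_exp_neg_sub_taylor_le hs ht.1 ht.2 hn
    _ = (n + 1) / (n ! * n) / (s + n + 1) := by
        rw [integral_const_mul, integral_rpow_zero_one (by positivity)]
        ring

lemma sqrt_pi_gt : (1.7724536 : ℝ) < √π :=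
  lt_sqrt_of_sq_lt (by nlinarith [pi_gt_d6])

lemma sqrt_pi_lt : √π < 1.772454 :=
  (sqrt_lt' (by norm_num)).2 (by nlinarith [pi_lt_d6])

/-- The quantity `(1/√π)(2∫_0^1 t^{1/2} e^{-t} dt - ∫_0^1 t^{3/2} e^{-t} dt)` lies between
`0.31445` and `0.31446`; in particular it is at least `0.31445` and twice it is at least
`0.6289`. -/
theorem stmt5 :
    0.31445 ≤ (1 / Real.sqrt Real.pi) *
        (2 * (∫ t in (0 : ℝ)..1, t ^ ((1 : ℝ) / 2) * Real.exp (-t)) -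
          ∫ t in (0 : ℝ)..1, t ^ ((3 : ℝ) / 2) * Real.exp (-t)) ∧
    (1 / Real.sqrt Real.pi) *
        (2 * (∫ t in (0 : ℝ)..1, t ^ ((1 : ℝ) / 2) * Real.exp (-t)) -
          ∫ t in (0 : ℝ)..1, t ^ ((3 : ℝ) / 2) * Real.exp (-t)) ≤ 0.31446 ∧
    0.6289 ≤ 2 * ((1 / Real.sqrt Real.pi) *
        (2 * (∫ t in (0 : ℝ)..1, t ^ ((1 : ℝ) / 2) * Real.exp (-t)) -
          ∫ t in (0 : ℝ)..1, t ^ ((3 : ℝ) / 2) * Real.exp (-t))) := by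
  have h₁ := abs_integral_rpow_mul_exp_neg_sub_sum_le (s := 1 / 2) (by norm_num) (n := 10)
    (by norm_num)
  have h₃ := abs_integral_rpow_mul_exp_neg_sub_sum_le (s := 3 / 2) (by norm_num) (n := 10)
    (by norm_num)
  simp only [abs_le, sum_range_succ, sum_range_zero, Nat.factorial] at h₁ h₃
  norm_num at h₁ h₃
  have hlo := sqrt_pi_gt
  have hhi := sqrt_pi_lt
  have hpos : 0 < √π := by linarith
  rw [one_div, inv_mul_eq_div, le_div_iff₀ hpos, div_le_iff₀ hpos]
  refine ⟨by nlinarith, by nlinarith, ?_⟩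
  rw [mul_div_assoc', le_div_iff₀ hpos]
  nlinarith
end
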